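/- Let σ > ζ > 0 and c > 0 satisfy σ·tanh(σc) + ζ·tanh(ζc) = σ - ζ. Define f_k(x) = h(A_k x) - b_kᵀ A_k x where h(u) = Σᵢ 2·log(2·cosh(uᵢ/2)), A_k is the 4k×k block matrix with blocks 2σW_k, -2ζW_k, -2σW_k, 2ζW_k, and b_k = (𝟙_k, 𝟙_k, -𝟙_k, -𝟙_k). Then x* = c·(1, 2, ..., k)ᵀ satisfies ∇f_k(x*) = 0, hence x* is the unique global minimizer of the strictly convex function f_k. -/

import Mathlib

noncomputable section

/-- The k×k matrix `W_k` with 1's on the main anti-diagonal (1-based entries `i+j = k+1`)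
and -1's on the adjacent anti-diagonal (`i+j = k`). -/
def Wmat (k : ℕ) : Matrix (Fin k) (Fin k) ℝ :=
  Matrix.of fun i j =>
    if (i : ℕ) + (j : ℕ) + 2 = k + 1 then 1
    else if (i : ℕ) + (j : ℕ) + 2 = k then -1
    else 0

/-- The 4k×k data matrix with vertical blocks `2σW_k, -2ζW_k, -2σW_k, 2ζW_k`. -/
def Amat (σ ζ : ℝ) (k : ℕ) : Matrix (Fin (4 * k)) (Fin k) ℝ :=
  Matrix.of fun i j =>
    if h1 : (i : ℕ) < k then 2 * σ * Wmat k ⟨i, h1⟩ j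
    else if h2 : (i : ℕ) < 2 * k then -2 * ζ * Wmat k ⟨(i : ℕ) - k, by omega⟩ j
    else if h3 : (i : ℕ) < 3 * k then -2 * σ * Wmat k ⟨(i : ℕ) - 2 * k, by omega⟩ j
    else 2 * ζ * Wmat k ⟨(i : ℕ) - 3 * k, by have := i.isLt; omega⟩ j

/-- The response vector `b_k = (𝟙_k, 𝟙_k, -𝟙_k, -𝟙_k)`. -/
def bvec (k : ℕ) : Fin (4 * k) → ℝ := fun i => if (i : ℕ) < 2 * k then 1 else -1

/-- The binary logistic regression loss `f_k(x) = h(A_k x) - b_kᵀ A_k x` with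
`h(u) = Σᵢ 2 log(2 cosh(uᵢ/2))`. -/
def fk (σ ζ : ℝ) (k : ℕ) (x : Fin k → ℝ) : ℝ :=
  (∑ i, 2 * Real.log (2 * Real.cosh ((Amat σ ζ k).mulVec x i / 2)))
    - ∑ i, bvec k i * (Amat σ ζ k).mulVec x i

/-- `x* = c·(1, 2, …, k)ᵀ`. -/
def xstar (c : ℝ) (k : ℕ) : Fin k → ℝ := fun i => c * ((i : ℕ) + 1)

/-- `K_{t,k} = span{e_{k-t+1}, …, e_k}` (1-based indexing). -/
def Kspan (k t : ℕ) : Submodule ℝ (Fin k → ℝ) :=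
  Submodule.span ℝ ((fun i : Fin k => Pi.single i (1 : ℝ)) '' {i : Fin k | k - t ≤ (i : ℕ)})

end

/-!
Write `f_k(x) = ∑ᵢ g((A x)ᵢ) - b ⬝ A x` with `g(t) = 2 log (2 cosh (t/2))`. The function `g` is
strictly convex with `g' = tanh (·/2)`, so summing its tangent-line inequalities at `A x*` gives
`f_k(x) > f_k(x*) + rᵀA (x - x*)` whenever `A x ≠ A x*`, where `r = tanh (A x*/2) - b`, so that
`rᵀA` is the gradient of `f_k` at `x*`. Since `W_k x* = c 𝟙`, the four row blocks of `A x*` are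
constant, equal to `2σc, -2ζc, -2σc, 2ζc`, and `rᵀA = 4 (σ tanh σc + ζ tanh ζc - σ + ζ) 𝟙ᵀW_k`,
which vanishes by the choice of `c`. Reversing the rows of `W_k` makes it lower bidiagonal with
unit diagonal, so `A` is injective once `ζ ≠ 0`. Hence `x*` is the strict global minimiser, and
Fermat's rule gives the vanishing derivative.
-/

open Matrix Real Set

lemma Real.tanh_strictMono : StrictMono tanh := fun a b hab => by
  by_contra! h
  have hmem : ∀ x, tanh x ∈ Ioo (-1) 1 := fun x => ⟨neg_one_lt_tanh x, tanh_lt_one x⟩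
  have := (artanh_le_artanh_iff (hmem b) (hmem a)).2 h
  rw [artanh_tanh, artanh_tanh] at this
  exact this.not_gt hab

lemma StrictConvexOn.add_mul_sub_lt {f : ℝ → ℝ} (hf : StrictConvexOn ℝ univ f) {w v f' : ℝ}
    (hd : HasDerivAt f f' w) (hwv : w ≠ v) : f w + f' * (v - w) < f v := by
  rcases hwv.lt_or_gt with h | h
  · have := hf.lt_slope_of_hasDerivAt (mem_univ w) (mem_univ v) h hd
    rw [slope_def_field, lt_div_iff₀ (sub_pos.2 h)] at this
    linarith
  · have := hf.slope_lt_of_hasDerivAt (mem_univ v) (mem_univ w) h hd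
    rw [slope_def_field, div_lt_iff₀ (sub_pos.2 h)] at this
    linarith

lemma StrictConvexOn.sum_add_dotProduct_lt {ι : Type*} [Fintype ι] {f f' : ℝ → ℝ}
    (hf : StrictConvexOn ℝ univ f) (hd : ∀ t, HasDerivAt f (f' t) t) {w v : ι → ℝ}
    (hwv : w ≠ v) : ∑ i, f (w i) + (f' ∘ w) ⬝ᵥ (v - w) < ∑ i, f (v i) := by
  obtain ⟨i₀, hi₀⟩ := Function.ne_iff.1 hwv
  rw [dotProduct, ← Finset.sum_add_distrib]
  refine Finset.sum_lt_sum (fun i _ => ?_) ⟨i₀, Finset.mem_univ _, hf.add_mul_sub_lt (hd _) hi₀⟩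
  rcases eq_or_ne (w i) (v i) with h | h
  · simp [h]
  · exact (hf.add_mul_sub_lt (hd _) h).le

theorem StrictConvexOn.sum_comp_mulVec_sub_dotProduct_lt {ι κ : Type*} [Fintype ι] [Fintype κ]
    {f f' : ℝ → ℝ} (hf : StrictConvexOn ℝ univ f) (hd : ∀ t, HasDerivAt f (f' t) t)
    {A : Matrix ι κ ℝ} (hA : Function.Injective A.mulVec) (b : ι → ℝ) {x₀ x : κ → ℝ}
    (hcrit : (fun i => f' ((A *ᵥ x₀) i) - b i) ᵥ* A = 0) (hx : x ≠ x₀) :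
    ∑ i, f ((A *ᵥ x₀) i) - b ⬝ᵥ (A *ᵥ x₀) < ∑ i, f ((A *ᵥ x) i) - b ⬝ᵥ (A *ᵥ x) := by
  have hlin : (f' ∘ (A *ᵥ x₀)) ⬝ᵥ (A *ᵥ x - A *ᵥ x₀) = b ⬝ᵥ (A *ᵥ x - A *ᵥ x₀) := by
    rw [← sub_eq_zero, ← sub_dotProduct, ← mulVec_sub, dotProduct_mulVec]
    exact hcrit.symm ▸ zero_dotProduct _
  have := hf.sum_add_dotProduct_lt hd (hA.ne hx.symm)
  rw [hlin, dotProduct_sub] at this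
  linarith

noncomputable def logCoshPotential (t : ℝ) : ℝ := 2 * log (2 * cosh (t / 2))

lemma hasDerivAt_logCoshPotential (t : ℝ) :
    HasDerivAt logCoshPotential (tanh (t / 2)) t := by
  have h := ((((hasDerivAt_id t).div_const 2).cosh.const_mul 2).log
    (by positivity)).const_mul 2
  refine h.congr_deriv ?_
  simp only [id, tanh_eq_sinh_div_cosh]
  field_simp

lemma strictConvexOn_logCoshPotential : StrictConvexOn ℝ univ logCoshPotential := by
  have hderiv : deriv logCoshPotential = fun t => tanh (t / 2) :=
    funext fun t => (hasDerivAt_logCoshPotential t).deriv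
  refine StrictMono.strictConvexOn_univ_of_deriv ?_ ?_
  · exact continuous_iff_continuousAt.2 fun t => (hasDerivAt_logCoshPotential t).continuousAt
  · rw [hderiv]
    exact tanh_strictMono.comp fun a b hab => by linarith

lemma Wmat_rev_apply {k : ℕ} (m j : Fin k) :
    Wmat k m.rev j = if j = m then 1 else if (j : ℕ) + 1 = m then -1 else 0 := by
  have := m.isLt
  simp only [Wmat, of_apply, Fin.val_rev, Fin.ext_iff]
  split_ifs <;> first | rfl | omega

lemma Wmat_mulVec_rev_of_val_eq_zero {k : ℕ} (u : Fin k → ℝ) {m : Fin k} (hm : (m : ℕ) = 0) :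
    (Wmat k *ᵥ u) m.rev = u m := by
  simp [mulVec, dotProduct, Wmat_rev_apply, hm, ite_mul]

lemma Wmat_mulVec_rev_of_val_add_one {k : ℕ} (u : Fin k → ℝ) {j m : Fin k}
    (hjm : (j : ℕ) + 1 = m) : (Wmat k *ᵥ u) m.rev = u m - u j := by
  have hiff : ∀ i : Fin k, (i : ℕ) + 1 = m ↔ i = j := fun i => by rw [Fin.ext_iff]; omega
  have hne : j ≠ m := fun h => by rw [h] at hjm; omega
  simp only [mulVec, dotProduct, Wmat_rev_apply, hiff, ite_mul, one_mul, neg_one_mul, zero_mul]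
  rw [Fintype.sum_eq_add m j hne.symm (fun i hi => by simp [hi.1, hi.2])]
  simp only [↓reduceIte, hne]
  ring

lemma Wmat_mulVec_xstar (c : ℝ) {k : ℕ} (p : Fin k) : (Wmat k *ᵥ xstar c k) p = c := by
  obtain ⟨m, rfl⟩ := Fin.rev_surjective p
  rcases m with ⟨_ | n, hm⟩
  · simp [Wmat_mulVec_rev_of_val_eq_zero (m := ⟨0, hm⟩) _ rfl, xstar]
  · rw [Wmat_mulVec_rev_of_val_add_one _ (j := ⟨n, by omega⟩) rfl]
    simp only [xstar]
    push_cast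
    ring

lemma Wmat_mulVec_injective (k : ℕ) : Function.Injective (Wmat k).mulVec := by
  suffices h : ∀ u : Fin k → ℝ, Wmat k *ᵥ u = 0 → u = 0 from fun u v huv =>
    sub_eq_zero.mp (h _ (by rw [mulVec_sub, huv, sub_self]))
  intro u hu
  have hval : ∀ n (hn : n < k), u ⟨n, hn⟩ = 0 := by
    intro n
    induction n with
    | zero =>
      intro hn
      simpa [Wmat_mulVec_rev_of_val_eq_zero u (m := ⟨0, hn⟩) rfl] using congrFun hu (Fin.rev ⟨0, hn⟩)
    | succ n ih =>
      intro hn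
      have := congrFun hu (Fin.rev ⟨n + 1, hn⟩)
      rw [Wmat_mulVec_rev_of_val_add_one u (j := ⟨n, by omega⟩) rfl, ih (by omega)] at this
      simpa using this
  exact funext fun m => hval m m.isLt

lemma Amat_finProdFinEquiv (σ ζ : ℝ) {k : ℕ} (b : Fin 4) (p j : Fin k) :
    Amat σ ζ k (finProdFinEquiv (b, p)) j = ![2 * σ, -2 * ζ, -2 * σ, 2 * ζ] b * Wmat k p j := by
  have hp := p.isLt
  have hW : ∀ n (hn : n < k), n = p → Wmat k ⟨n, hn⟩ j = Wmat k p j := by rintro _ _ rfl; rfl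
  fin_cases b <;> simp only [Amat, of_apply, finProdFinEquiv_apply_val] <;> split_ifs <;>
    first | omega | (rw [hW _ _ (by omega)]; simp)

lemma bvec_finProdFinEquiv {k : ℕ} (b : Fin 4) (p : Fin k) :
    bvec k (finProdFinEquiv (b, p)) = ![1, 1, -1, -1] b := by
  have hp := p.isLt
  fin_cases b <;> simp only [bvec, finProdFinEquiv_apply_val] <;> split_ifs <;> first | omega | simp

lemma Amat_mulVec_finProdFinEquiv (σ ζ : ℝ) {k : ℕ} (u : Fin k → ℝ) (b : Fin 4) (p : Fin k) :
    (Amat σ ζ k *ᵥ u) (finProdFinEquiv (b, p)) =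
      ![2 * σ, -2 * ζ, -2 * σ, 2 * ζ] b * (Wmat k *ᵥ u) p := by
  simp only [mulVec, dotProduct, Amat_finProdFinEquiv, Finset.mul_sum, mul_assoc]

lemma Amat_mulVec_injective (σ : ℝ) {ζ : ℝ} (hζ : ζ ≠ 0) (k : ℕ) :
    Function.Injective (Amat σ ζ k).mulVec := by
  intro u v huv
  apply Wmat_mulVec_injective k
  funext p
  simpa [Amat_mulVec_finProdFinEquiv, hζ] using congrFun huv (finProdFinEquiv (1, p))

lemma vecMul_Amat_eq_zero {σ ζ c : ℝ} (heq : σ * tanh (σ * c) + ζ * tanh (ζ * c) = σ - ζ)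
    (k : ℕ) : (fun i => tanh ((Amat σ ζ k *ᵥ xstar c k) i / 2) - bvec k i) ᵥ* Amat σ ζ k = 0 := by
  funext j
  simp only [vecMul, dotProduct, Pi.zero_apply]
  rw [← finProdFinEquiv.sum_comp, Fintype.sum_prod_type_right]
  refine Finset.sum_eq_zero fun p _ => ?_
  simp only [Fin.sum_univ_four, Amat_mulVec_finProdFinEquiv, Wmat_mulVec_xstar,
    Amat_finProdFinEquiv, bvec_finProdFinEquiv]
  have hσ : 2 * σ * c / 2 = σ * c := by ring
  have hζ : 2 * ζ * c / 2 = ζ * c := by ring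
  simp only [Matrix.cons_val, neg_mul, neg_div, hσ, hζ, tanh_neg]
  linear_combination 4 * Wmat k p j * heq

theorem xstar_is_unique_minimizer_general (σ ζ c : ℝ) (hζ : 0 < ζ)
    (heq : σ * Real.tanh (σ * c) + ζ * Real.tanh (ζ * c) = σ - ζ) (k : ℕ) :
    fderiv ℝ (fk σ ζ k) (xstar c k) = 0 ∧
      ∀ x : Fin k → ℝ, x ≠ xstar c k → fk σ ζ k (xstar c k) < fk σ ζ k x := by
  have hmin : ∀ x : Fin k → ℝ, x ≠ xstar c k → fk σ ζ k (xstar c k) < fk σ ζ k x := fun x hx =>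
    strictConvexOn_logCoshPotential.sum_comp_mulVec_sub_dotProduct_lt
      hasDerivAt_logCoshPotential (Amat_mulVec_injective σ hζ.ne' k) (bvec k)
      (vecMul_Amat_eq_zero heq k) hx
  refine ⟨IsLocalMin.fderiv_eq_zero (Filter.Eventually.of_forall fun x => ?_), hmin⟩
  rcases eq_or_ne x (xstar c k) with rfl | hx
  · exact le_rfl
  · exact (hmin x hx).le

theorem xstar_is_unique_minimizer (σ ζ c : ℝ) (hζ : 0 < ζ) (hζσ : ζ < σ) (hc : 0 < c)
    (heq : σ * Real.tanh (σ * c) + ζ * Real.tanh (ζ * c) = σ - ζ) (k : ℕ) :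
    fderiv ℝ (fk σ ζ k) (xstar c k) = 0 ∧
      ∀ x : Fin k → ℝ, x ≠ xstar c k → fk σ ζ k (xstar c k) < fk σ ζ k x :=
  xstar_is_unique_minimizer_general σ ζ c hζ heq k
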